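/- For n ≥ 3, the submonoid B⁺_{n−1} of B⁺_n is closed under left lcm: any two elements β, γ of B⁺_{n−1} admit in B⁺_n a least common multiple with respect to left divisibility (an element δ with β and γ left dividing δ, and δ left dividing every common such multiple), and this element lies in B⁺_{n−1}. -/

import Mathlib

namespace Braid

/-- Defining relations of the braid group, with generators indexed by `Fin m`
(the index `i : Fin m` stands for the Artin generator `σ_{i+1}`). -/
def braidRels (m : ℕ) : Set (FreeGroup (Fin m)) :=
  {r | ∃ i j : Fin m,
      ((i : ℕ) + 2 ≤ (j : ℕ) ∧
        r = FreeGroup.of i * FreeGroup.of j * (FreeGroup.of i)⁻¹ * (FreeGroup.of j)⁻¹) ∨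
      ((j : ℕ) = (i : ℕ) + 1 ∧
        r = FreeGroup.of i * FreeGroup.of j * FreeGroup.of i *
            (FreeGroup.of j)⁻¹ * (FreeGroup.of i)⁻¹ * (FreeGroup.of j)⁻¹)}

/-- The braid group `B_n` on `n` strands, presented by the Artin generators
`σ_1, …, σ_{n-1}` and the braid relations. -/
abbrev B (n : ℕ) : Type := PresentedGroup (braidRels (n - 1))

/-- The Artin generator `σ_i` of `B n`, for `1 ≤ i ≤ n-1` (junk value `1` otherwise). -/
def gen (n i : ℕ) : B n :=
  if h : i - 1 < n - 1 then PresentedGroup.of (⟨i - 1, h⟩ : Fin (n - 1)) else 1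

/-- The positive braid monoid `B⁺_k` inside `B n`: the submonoid generated by
`σ_1, …, σ_{k-1}`. -/
def Bplus (n k : ℕ) : Submonoid (B n) :=
  Submonoid.closure {x | ∃ i, 1 ≤ i ∧ i + 1 ≤ k ∧ x = gen n i}

/-- The subgroup `B_k` of `B n`, generated by `σ_1, …, σ_{k-1}`. -/
def Bsub (n k : ℕ) : Subgroup (B n) :=
  Subgroup.closure {x | ∃ i, 1 ≤ i ∧ i + 1 ≤ k ∧ x = gen n i}

/-- `β` left-divides `γ` (with respect to the positive monoid `B⁺_n`). -/
def LDiv (n : ℕ) (β γ : B n) : Prop := β⁻¹ * γ ∈ Bplus n n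

/-- `β` right-divides `γ` (with respect to the positive monoid `B⁺_n`). -/
def RDiv (n : ℕ) (β γ : B n) : Prop := γ * β⁻¹ ∈ Bplus n n

/-- The Garside element `Δ_k = (σ_1⋯σ_{k-1})(σ_1⋯σ_{k-2})⋯(σ_1σ_2)σ_1` of `B⁺_k`,
viewed inside `B n`. -/
def delta (n k : ℕ) : B n :=
  ((List.range (k - 1)).reverse.map
    (fun j => ((List.range' 1 (j + 1)).map (gen n)).prod)).prod

/-- The `k`-th power of the flip automorphism `φ_n` of `B n`:
conjugation by `Δ_n^k`. -/
def flip (n k : ℕ) (x : B n) : B n := delta n n ^ k * x * (delta n n ^ k)⁻¹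

/-- The set `φ_n^k(B⁺_{n-1})` inside `B n`. -/
def flipSet (n k : ℕ) : Set (B n) := flip n k '' (Bplus n (n - 1) : Set (B n))

/-- `δ` is the maximal right divisor of `β` lying in the set `X`:
`δ ∈ X`, `δ` right-divides `β`, and every right divisor of `β` lying in `X`
right-divides `δ`. -/
def IsMaxRDivIn (n : ℕ) (X : Set (B n)) (β δ : B n) : Prop :=
  δ ∈ X ∧ RDiv n δ β ∧ ∀ γ ∈ X, RDiv n γ β → RDiv n γ δ

/-- The product `φ_n^{d-1}(b d) ⋯ φ_n^{k-1}(b k)` (factors in decreasing order of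
the index, from `d` down to `k`). -/
def tailProd (n : ℕ) (b : ℕ → B n) (k d : ℕ) : B n :=
  ((List.range' k (d + 1 - k)).reverse.map (fun l => flip n (l - 1) (b l))).prod

/-- `(b d, …, b 1)` is the `φ_n`-splitting of `β`: each `b k` lies in `B⁺_{n-1}`,
`b d ≠ 1`, `β = φ_n^{d-1}(b d) ⋯ φ_n(b 2) (b 1)`, and for each `k`, the element
`φ_n^{k-1}(b k)` is the maximal right divisor of `φ_n^{d-1}(b d) ⋯ φ_n^{k-1}(b k)`
lying in `φ_n^{k-1}(B⁺_{n-1})`. -/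
def IsSplitting (n d : ℕ) (b : ℕ → B n) (β : B n) : Prop :=
  1 ≤ d ∧ (∀ k, 1 ≤ k → k ≤ d → b k ∈ Bplus n (n - 1)) ∧ b d ≠ 1 ∧
  β = tailProd n b 1 d ∧
  ∀ k, 1 ≤ k → k ≤ d →
    IsMaxRDivIn n (flipSet n (k - 1)) (tailProd n b k d) (flip n (k - 1) (b k))

/-- Evaluation of a word over the letters `σ_i^{±1}` in `B n`: the letter `(i, true)`
stands for `σ_i` and `(i, false)` for `σ_i⁻¹`. -/
def evalWord (n : ℕ) (w : List (ℕ × Bool)) : B n :=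
  (w.map (fun p => if p.2 then gen n p.1 else (gen n p.1)⁻¹)).prod

/-- A word over the letters `σ_j^{±1}` is `σ_i`-positive: it contains at least one
letter `σ_i`, no letter `σ_i⁻¹` and no letter `σ_j^{±1}` with `j > i`. -/
def SigmaPos (i : ℕ) (w : List (ℕ × Bool)) : Prop :=
  (i, true) ∈ w ∧ (i, false) ∉ w ∧ ∀ p ∈ w, 1 ≤ p.1 ∧ p.1 ≤ i

/-- A word over the letters `σ_j^{±1}` is `σ_i`-negative: it contains at least one
letter `σ_i⁻¹`, no letter `σ_i` and no letter `σ_j^{±1}` with `j > i`. -/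
def SigmaNeg (i : ℕ) (w : List (ℕ × Bool)) : Prop :=
  (i, false) ∈ w ∧ (i, true) ∉ w ∧ ∀ p ∈ w, 1 ≤ p.1 ∧ p.1 ≤ i

/-- The Dehornoy ordering on `B n`: `β < γ` iff `β⁻¹γ` is represented by a
`σ_i`-positive word for some `i ≤ n-1`. -/
def dlt (n : ℕ) (β γ : B n) : Prop :=
  ∃ i w, i + 1 ≤ n ∧ SigmaPos i w ∧ evalWord n w = β⁻¹ * γ

/-- The nonstrict Dehornoy ordering. -/
def dle (n : ℕ) (β γ : B n) : Prop := dlt n β γ ∨ β = γ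

/-- The minimal length of a word over `σ_1^{±1}, …, σ_{n-1}^{±1}` representing `β`. -/
noncomputable def normSigma (n : ℕ) (β : B n) : ℕ :=
  sInf {l | ∃ w : List (ℕ × Bool), (∀ p ∈ w, 1 ≤ p.1 ∧ p.1 ≤ n - 1) ∧
    evalWord n w = β ∧ w.length = l}

/-- The (common) length of the positive words over `σ_1, …, σ_{n-1}` representing a
positive braid `β`. -/
noncomputable def posLen (n : ℕ) (β : B n) : ℕ :=
  sInf {l | ∃ w : List (ℕ × Bool), (∀ p ∈ w, 1 ≤ p.1 ∧ p.1 ≤ n - 1 ∧ p.2 = true) ∧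
    evalWord n w = β ∧ w.length = l}

/-- The Birman–Ko–Lee generator `a_{p,q} = σ_p ⋯ σ_{q-2} σ_{q-1} σ_{q-2}⁻¹ ⋯ σ_p⁻¹`
of `B n`. -/
def bkl (n p q : ℕ) : B n :=
  ((List.range' p (q - 1 - p)).map (gen n)).prod * gen n (q - 1) *
    (((List.range' p (q - 1 - p)).map (gen n)).prod)⁻¹

/-- The dual braid monoid `B⁺*_n`: the submonoid of `B n` generated by the
Birman–Ko–Lee generators. -/
def DualBplus (n : ℕ) : Submonoid (B n) :=
  Submonoid.closure {x | ∃ p q, 1 ≤ p ∧ p < q ∧ q ≤ n ∧ x = bkl n p q}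

/-- Evaluation in `B n` of a word over the letters `a_{p,q}^{±1}`. -/
def evalDual (n : ℕ) (w : List ((ℕ × ℕ) × Bool)) : B n :=
  (w.map (fun l => if l.2 then bkl n l.1.1 l.1.2 else (bkl n l.1.1 l.1.2)⁻¹)).prod

/-- The minimal length of a word over the letters `a_{p,q}^{±1}` (`1 ≤ p < q ≤ n`)
representing `β`. -/
noncomputable def normDual (n : ℕ) (β : B n) : ℕ :=
  sInf {l | ∃ w : List ((ℕ × ℕ) × Bool),
    (∀ p ∈ w, 1 ≤ p.1.1 ∧ p.1.1 < p.1.2 ∧ p.1.2 ≤ n) ∧ evalDual n w = β ∧ w.length = l}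

/-!
Garside's theory of the positive braid monoid, carried out on words. Garside's key lemma says
that if `σ_i u = σ_j v` in the positive monoid, then `lcm(σ_i, σ_j)` left-divides both sides; it
is proved by induction on the length and along a chain of elementary braid relations. It yields
cancellativity, and, by induction on the length of a common multiple, a least common multiple of
any two words that have a common multiple. A word over `σ_1, …, σ_m` divides a power of the
Garside element `Δ_{m+1}`, so common multiples always exist: the monoid is Ore, embeds into its
group of fractions, and since `B_n` maps to that group, positive words equal in `B_n` are braid
equivalent. Finally, braid relations do not change the set of letters of a word, so the lcm of two
words over `σ_1, …, σ_{k-1}`, which divides a power of `Δ_k`, is again a word over these letters.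
-/

namespace Garside

-- The letter `i` stands for the Artin generator `σ_{i+1}`.
abbrev Word : Type := List ℕ

inductive BraidRel : Word → Word → Prop
  | far (i j : ℕ) (h : i + 2 ≤ j) : BraidRel [i, j] [j, i]
  | near (i : ℕ) : BraidRel [i, i + 1, i] [i + 1, i, i + 1]

def Step (u v : Word) : Prop :=
  ∃ p a b q, (BraidRel a b ∨ BraidRel b a) ∧ u = p ++ a ++ q ∧ v = p ++ b ++ q

def Eqv : Word → Word → Prop := Relation.ReflTransGen Step

theorem BraidRel.length_eq {a b : Word} (h : BraidRel a b) : a.length = b.length := by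
  cases h <;> rfl

theorem BraidRel.mem_iff {a b : Word} {x : ℕ} (h : BraidRel a b) : x ∈ a ↔ x ∈ b := by
  cases h <;> simp <;> tauto

theorem Step.symm {u v : Word} (h : Step u v) : Step v u := by
  obtain ⟨p, a, b, q, hr, rfl, rfl⟩ := h
  exact ⟨p, b, a, q, hr.symm, rfl, rfl⟩

theorem Step.append {u v : Word} (h : Step u v) (p q : Word) :
    Step (p ++ u ++ q) (p ++ v ++ q) := by
  obtain ⟨p', a, b, q', hr, rfl, rfl⟩ := h
  exact ⟨p ++ p', a, b, q' ++ q, hr, by simp, by simp⟩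

theorem Step.reverse {u v : Word} (h : Step u v) : Step u.reverse v.reverse := by
  obtain ⟨p, a, b, q, hr, rfl, rfl⟩ := h
  refine ⟨q.reverse, a.reverse, b.reverse, p.reverse, ?_, by simp, by simp⟩
  have rev : ∀ {a b : Word}, BraidRel a b →
      BraidRel a.reverse b.reverse ∨ BraidRel b.reverse a.reverse := by
    rintro _ _ (⟨i, j, hij⟩ | ⟨i⟩)
    exacts [Or.inr (.far i j hij), Or.inl (.near i)]
  rcases hr with h | h
  exacts [rev h, (rev h).symm]

theorem Step.length_eq {u v : Word} (h : Step u v) : u.length = v.length := by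
  obtain ⟨p, a, b, q, hr, rfl, rfl⟩ := h
  have : a.length = b.length := hr.elim BraidRel.length_eq (fun h => h.length_eq.symm)
  simp [this]

theorem Step.mem_iff {u v : Word} {x : ℕ} (h : Step u v) : x ∈ u ↔ x ∈ v := by
  obtain ⟨p, a, b, q, hr, rfl, rfl⟩ := h
  have : x ∈ a ↔ x ∈ b := hr.elim BraidRel.mem_iff (fun h => h.mem_iff.symm)
  simp [this]

namespace Eqv

theorem refl (u : Word) : Eqv u u := Relation.ReflTransGen.refl

theorem trans {u v w : Word} (h₁ : Eqv u v) (h₂ : Eqv v w) : Eqv u w :=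
  Relation.ReflTransGen.trans h₁ h₂

theorem of_step {u v : Word} (h : Step u v) : Eqv u v := Relation.ReflTransGen.single h

theorem symm {u v : Word} (h : Eqv u v) : Eqv v u := by
  induction h with
  | refl => exact refl _
  | tail _ hs ih => exact (of_step hs.symm).trans ih

instance : Trans Eqv Eqv Eqv := ⟨trans⟩

theorem of_braidRel {a b : Word} (h : BraidRel a b) : Eqv a b :=
  of_step ⟨[], a, b, [], Or.inl h, by simp, by simp⟩

theorem append_append {u v : Word} (h : Eqv u v) (p q : Word) :
    Eqv (p ++ u ++ q) (p ++ v ++ q) := by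
  induction h with
  | refl => exact refl _
  | tail _ hs ih => exact ih.trans (of_step (hs.append p q))

theorem append_left {u v : Word} (h : Eqv u v) (p : Word) : Eqv (p ++ u) (p ++ v) := by
  simpa using h.append_append p []

theorem append_right {u v : Word} (h : Eqv u v) (q : Word) : Eqv (u ++ q) (v ++ q) := by
  simpa using h.append_append [] q

theorem append {u v x y : Word} (h : Eqv u v) (h' : Eqv x y) : Eqv (u ++ x) (v ++ y) :=
  (h.append_right x).trans (h'.append_left v)

theorem cons {u v : Word} (h : Eqv u v) (a : ℕ) : Eqv (a :: u) (a :: v) :=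
  h.append_left [a]

theorem reverse {u v : Word} (h : Eqv u v) : Eqv u.reverse v.reverse := by
  induction h with
  | refl => exact refl _
  | tail _ hs ih => exact ih.trans (of_step hs.reverse)

theorem length_eq {u v : Word} (h : Eqv u v) : u.length = v.length := by
  induction h with
  | refl => rfl
  | tail _ hs ih => exact ih.trans hs.length_eq

theorem mem_iff {u v : Word} {x : ℕ} (h : Eqv u v) : x ∈ u ↔ x ∈ v := by
  induction h with
  | refl => rfl
  | tail _ hs ih => exact ih.trans hs.mem_iff

end Eqv

theorem eqv_swap {i j : ℕ} (h : i + 2 ≤ j ∨ j + 2 ≤ i) (t : Word) :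
    Eqv (i :: j :: t) (j :: i :: t) := by
  rcases h with h | h
  · exact (Eqv.of_braidRel (.far i j h)).append_right t
  · exact (Eqv.of_braidRel (.far j i h)).symm.append_right t

theorem eqv_braid {i j : ℕ} (h : j = i + 1 ∨ i = j + 1) (t : Word) :
    Eqv (i :: j :: i :: t) (j :: i :: j :: t) := by
  rcases h with rfl | rfl
  · exact (Eqv.of_braidRel (.near i)).append_right t
  · exact (Eqv.of_braidRel (.near j)).symm.append_right t

/-- `σ_{i+1} · complement i j` is the least common multiple of `σ_{i+1}` and `σ_{j+1}`. -/
def complement (i j : ℕ) : Word :=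
  if i = j then [] else if i + 2 ≤ j ∨ j + 2 ≤ i then [j] else [j, i]

theorem complement_self (i : ℕ) : complement i i = [] := by simp [complement]

theorem complement_of_far {i j : ℕ} (h : i + 2 ≤ j ∨ j + 2 ≤ i) : complement i j = [j] := by
  have : i ≠ j := by omega
  simp [complement, this, h]

theorem complement_of_near {i j : ℕ} (h : j = i + 1 ∨ i = j + 1) :
    complement i j = [j, i] := by
  have h₁ : i ≠ j := by omega
  have h₂ : ¬ (i + 2 ≤ j ∨ j + 2 ≤ i) := by omega
  simp [complement, h₁, h₂]

theorem letter_trichotomy (i j : ℕ) :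
    i = j ∨ (i + 2 ≤ j ∨ j + 2 ≤ i) ∨ (j = i + 1 ∨ i = j + 1) := by omega

theorem eqv_cons_complement (i j : ℕ) (t : Word) :
    Eqv (i :: (complement i j ++ t)) (j :: (complement j i ++ t)) := by
  rcases letter_trichotomy i j with rfl | h | h
  · exact Eqv.refl _
  · rw [complement_of_far h, complement_of_far (by omega)]
    exact eqv_swap h t
  · rw [complement_of_near h, complement_of_near (by omega)]
    exact eqv_braid h t

/-- `i :: u` and `j :: v` have the left divisor `lcm(σ_{i+1}, σ_{j+1})` in common. -/
def HeadLcm (i : ℕ) (u : Word) (j : ℕ) (v : Word) : Prop :=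
  ∃ w, Eqv u (complement i j ++ w) ∧ Eqv v (complement j i ++ w)

theorem HeadLcm.refl (j : ℕ) (v : Word) : HeadLcm j v j v :=
  ⟨v, by simpa [complement_self] using Eqv.refl v, by simpa [complement_self] using Eqv.refl v⟩

def KeyLemmaBelow (L : ℕ) : Prop :=
  ∀ (u v : Word) (i j : ℕ), u.length < L → Eqv (i :: u) (j :: v) → HeadLcm i u j v

namespace KeyLemmaBelow

variable {L : ℕ} {i j k : ℕ} {ρ u v w₁ : Word}

theorem cancel (IH : KeyLemmaBelow L) (hu : u.length < L) (h : Eqv (i :: u) (i :: v)) :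
    Eqv u v := by
  obtain ⟨w, hu', hv'⟩ := IH u v i i hu h
  rw [complement_self] at hu' hv'
  exact hu'.trans hv'.symm

theorem far (IH : KeyLemmaBelow L) (hij : i + 2 ≤ j ∨ j + 2 ≤ i) (hu : u.length < L)
    (h : Eqv (i :: u) (j :: v)) : ∃ w, Eqv u (j :: w) ∧ Eqv v (i :: w) := by
  simpa [HeadLcm, complement_of_far hij,
    complement_of_far (show j + 2 ≤ i ∨ i + 2 ≤ j by omega)]
    using IH u v i j hu h

theorem near (IH : KeyLemmaBelow L) (hij : j = i + 1 ∨ i = j + 1) (hu : u.length < L)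
    (h : Eqv (i :: u) (j :: v)) : ∃ w, Eqv u (j :: i :: w) ∧ Eqv v (i :: j :: w) := by
  simpa [HeadLcm, complement_of_near hij,
    complement_of_near (show i = j + 1 ∨ j = i + 1 by omega)]
    using IH u v i j hu h

theorem headLcm_swap_of_far (IH : KeyLemmaBelow L) (hik : i + 2 ≤ k ∨ k + 2 ≤ i)
    (hkj : k + 2 ≤ j ∨ j + 2 ≤ k) (hρ : ρ.length < L)
    (E : Eqv (i :: ρ) (j :: w₁)) (hv : Eqv v (k :: w₁)) : HeadLcm i (k :: ρ) j v := by
  rcases letter_trichotomy j i with rfl | hji | hji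
  · refine ⟨k :: ρ, by simpa [complement_self] using Eqv.refl _, ?_⟩
    simpa [complement_self] using hv.trans ((IH.cancel hρ E).symm.cons k)
  · obtain ⟨w₂, hρ₂, hw₁⟩ := IH.far (by omega) hρ E
    refine ⟨k :: w₂, ?_, ?_⟩
    · rw [complement_of_far (by omega)]
      exact (hρ₂.cons k).trans (eqv_swap (by omega) w₂)
    · rw [complement_of_far (by omega)]
      exact hv.trans ((hw₁.cons k).trans (eqv_swap (by omega) w₂))
  · obtain ⟨w₂, hρ₂, hw₁⟩ := IH.near (by omega) hρ E
    refine ⟨k :: w₂, ?_, ?_⟩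
    · rw [complement_of_near (by omega)]
      calc Eqv (k :: ρ) (k :: j :: i :: w₂) := hρ₂.cons k
        Eqv _ (j :: k :: i :: w₂) := eqv_swap (by omega) _
        Eqv _ (j :: i :: k :: w₂) := (eqv_swap (by omega) w₂).cons j
    · rw [complement_of_near (by omega)]
      calc Eqv v (k :: i :: j :: w₂) := hv.trans (hw₁.cons k)
        Eqv _ (i :: k :: j :: w₂) := eqv_swap (by omega) _
        Eqv _ (i :: j :: k :: w₂) := (eqv_swap (by omega) w₂).cons i

theorem headLcm_swap_of_near (IH : KeyLemmaBelow L) (hik : i + 2 ≤ k ∨ k + 2 ≤ i)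
    (hkj : j = k + 1 ∨ k = j + 1) (hρ : ρ.length < L)
    (E : Eqv (i :: ρ) (j :: k :: w₁)) (hv : Eqv v (k :: j :: w₁)) :
    HeadLcm i (k :: ρ) j v := by
  have hE := E.length_eq
  simp only [List.length_cons] at hE
  rcases letter_trichotomy j i with rfl | hji | hji
  · omega
  · obtain ⟨w₂, hρ₂, hkw₁⟩ := IH.far (by omega) hρ E
    obtain ⟨w₃, hw₁, hw₂⟩ := IH.far (by omega) (by omega) hkw₁
    refine ⟨k :: j :: w₃, ?_, ?_⟩
    · rw [complement_of_far (by omega)]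
      calc Eqv (k :: ρ) (k :: j :: k :: w₃) := (hρ₂.trans (hw₂.cons j)).cons k
        Eqv _ (j :: k :: j :: w₃) := eqv_braid hkj w₃
    · rw [complement_of_far (by omega)]
      calc Eqv v (k :: j :: i :: w₃) := hv.trans ((hw₁.cons j).cons k)
        Eqv _ (k :: i :: j :: w₃) := (eqv_swap (by omega) w₃).cons k
        Eqv _ (i :: k :: j :: w₃) := eqv_swap (by omega) _
  · obtain ⟨w₂, hρ₂, hkw₁⟩ := IH.near hji.symm hρ E
    obtain ⟨w₃, hw₁, hjw₂⟩ := IH.far (by omega) (by omega) hkw₁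
    have hρ₂l := hρ₂.length_eq
    simp only [List.length_cons] at hρ₂l
    obtain ⟨w₄, hw₂, hw₃⟩ := IH.near (by omega) (by omega) hjw₂
    refine ⟨k :: j :: i :: w₄, ?_, ?_⟩
    · rw [complement_of_near (by omega)]
      calc Eqv (k :: ρ) (k :: j :: i :: k :: j :: w₄) :=
            (hρ₂.trans ((hw₂.cons i).cons j)).cons k
        Eqv _ (k :: j :: k :: i :: j :: w₄) := ((eqv_swap (by omega) _).cons j).cons k
        Eqv _ (j :: k :: j :: i :: j :: w₄) := eqv_braid hkj _
        Eqv _ (j :: k :: i :: j :: i :: w₄) := ((eqv_braid (by omega) w₄).cons k).cons j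
        Eqv _ (j :: i :: k :: j :: i :: w₄) := (eqv_swap (by omega) _).cons j
    · rw [complement_of_near (by omega)]
      calc Eqv v (k :: j :: i :: j :: k :: w₄) :=
            hv.trans (((hw₁.trans (hw₃.cons i)).cons j).cons k)
        Eqv _ (k :: i :: j :: i :: k :: w₄) := (eqv_braid (by omega) _).cons k
        Eqv _ (i :: k :: j :: i :: k :: w₄) := eqv_swap (by omega) _
        Eqv _ (i :: k :: j :: k :: i :: w₄) := (((eqv_swap (by omega) w₄).cons j).cons k).cons i
        Eqv _ (i :: j :: k :: j :: i :: w₄) := (eqv_braid (by omega) _).cons i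

theorem headLcm_swap (IH : KeyLemmaBelow L) (hik : i + 2 ≤ k ∨ k + 2 ≤ i)
    (hρ : ρ.length < L) (h : HeadLcm k (i :: ρ) j v) : HeadLcm i (k :: ρ) j v := by
  obtain ⟨w₁, E, hv⟩ := h
  rcases letter_trichotomy k j with rfl | hkj | hkj
  · rw [complement_self] at E hv
    refine ⟨ρ, by simpa [complement_of_far hik] using Eqv.refl _, ?_⟩
    simpa [complement_of_far (show k + 2 ≤ i ∨ i + 2 ≤ k by omega)] using hv.trans E.symm
  · rw [complement_of_far hkj] at E
    rw [complement_of_far (show j + 2 ≤ k ∨ k + 2 ≤ j by omega)] at hv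
    exact IH.headLcm_swap_of_far hik hkj hρ E hv
  · rw [complement_of_near hkj] at E
    rw [complement_of_near (show k = j + 1 ∨ j = k + 1 by omega)] at hv
    exact IH.headLcm_swap_of_near hik hkj hρ E hv

theorem headLcm_braid_of_far (IH : KeyLemmaBelow L) (hik : k = i + 1 ∨ i = k + 1)
    (hkj : k + 2 ≤ j ∨ j + 2 ≤ k) (hρ : ρ.length + 1 < L)
    (E : Eqv (i :: k :: ρ) (j :: w₁)) (hv : Eqv v (k :: w₁)) :
    HeadLcm i (k :: i :: ρ) j v := by
  rcases letter_trichotomy j i with rfl | hji | hji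
  · omega
  · obtain ⟨w₂, hkρ, hw₁⟩ := IH.far (by omega) (by simpa using hρ) E
    obtain ⟨w₃, hρ₃, hw₂⟩ := IH.far (by omega) (by omega) hkρ
    refine ⟨k :: i :: w₃, ?_, ?_⟩
    · rw [complement_of_far (by omega)]
      calc Eqv (k :: i :: ρ) (k :: i :: j :: w₃) := (hρ₃.cons i).cons k
        Eqv _ (k :: j :: i :: w₃) := (eqv_swap (by omega) w₃).cons k
        Eqv _ (j :: k :: i :: w₃) := eqv_swap (by omega) _
    · rw [complement_of_far (by omega)]
      calc Eqv v (k :: i :: k :: w₃) := hv.trans ((hw₁.trans (hw₂.cons i)).cons k)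
        Eqv _ (i :: k :: i :: w₃) := eqv_braid (by omega) w₃
  · obtain ⟨w₂, hkρ, hw₁⟩ := IH.near hji.symm (by simpa using hρ) E
    obtain ⟨w₃, hρ₃, hiw₂⟩ := IH.far (by omega) (by omega) hkρ
    have hkρl := hkρ.length_eq
    simp only [List.length_cons] at hkρl
    obtain ⟨w₄, hw₂, hw₃⟩ := IH.near hik (by omega) hiw₂
    refine ⟨k :: i :: j :: w₄, ?_, ?_⟩
    · rw [complement_of_near (by omega)]
      calc Eqv (k :: i :: ρ) (k :: i :: j :: i :: k :: w₄) :=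
            ((hρ₃.trans (hw₃.cons j)).cons i).cons k
        Eqv _ (k :: j :: i :: j :: k :: w₄) := (eqv_braid (by omega) _).cons k
        Eqv _ (j :: k :: i :: j :: k :: w₄) := eqv_swap (by omega) _
        Eqv _ (j :: k :: i :: k :: j :: w₄) := (((eqv_swap (by omega) w₄).cons i).cons k).cons j
        Eqv _ (j :: i :: k :: i :: j :: w₄) := (eqv_braid (by omega) _).cons j
    · rw [complement_of_near (by omega)]
      calc Eqv v (k :: i :: j :: k :: i :: w₄) :=
            hv.trans ((hw₁.trans ((hw₂.cons j).cons i)).cons k)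
        Eqv _ (k :: i :: k :: j :: i :: w₄) := ((eqv_swap (by omega) _).cons i).cons k
        Eqv _ (i :: k :: i :: j :: i :: w₄) := eqv_braid (by omega) _
        Eqv _ (i :: k :: j :: i :: j :: w₄) := ((eqv_braid (by omega) w₄).cons k).cons i
        Eqv _ (i :: j :: k :: i :: j :: w₄) := (eqv_swap (by omega) _).cons i

theorem headLcm_braid_of_near (IH : KeyLemmaBelow L) (hik : k = i + 1 ∨ i = k + 1)
    (hkj : j = k + 1 ∨ k = j + 1) (hρ : ρ.length + 1 < L)
    (E : Eqv (i :: k :: ρ) (j :: k :: w₁)) (hv : Eqv v (k :: j :: w₁)) :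
    HeadLcm i (k :: i :: ρ) j v := by
  have hE := E.length_eq
  simp only [List.length_cons] at hE
  rcases letter_trichotomy j i with rfl | hji | hji
  · have hρ₁ : Eqv ρ w₁ := IH.cancel (by omega) (IH.cancel (by simpa using hρ) E)
    refine ⟨k :: j :: ρ, by simpa [complement_self] using Eqv.refl _, ?_⟩
    simpa [complement_self] using hv.trans ((hρ₁.symm.cons j).cons k)
  · obtain ⟨w₂, hkρ, hkw₁⟩ := IH.far (by omega) (by simpa using hρ) E
    obtain ⟨w₃, hρ₃, hw₂⟩ := IH.near (by omega) (by omega) hkρ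
    obtain ⟨w₄, hw₁, hw₂'⟩ := IH.near (by omega) (by omega) hkw₁
    have hρ₃l := hρ₃.length_eq
    simp only [List.length_cons] at hρ₃l
    have hjw₃ : Eqv (j :: w₃) (i :: w₄) :=
      IH.cancel (by simp; omega) (hw₂.symm.trans hw₂')
    obtain ⟨w₅, hw₃, hw₄⟩ := IH.far (by omega) (by omega) hjw₃
    refine ⟨k :: j :: i :: k :: w₅, ?_, ?_⟩
    · rw [complement_of_far (by omega)]
      calc Eqv (k :: i :: ρ) (k :: i :: j :: k :: i :: w₅) :=
            ((hρ₃.trans ((hw₃.cons k).cons j)).cons i).cons k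
        Eqv _ (k :: j :: i :: k :: i :: w₅) := (eqv_swap (by omega) _).cons k
        Eqv _ (k :: j :: k :: i :: k :: w₅) := ((eqv_braid (by omega) w₅).cons j).cons k
        Eqv _ (j :: k :: j :: i :: k :: w₅) := eqv_braid (by omega) _
    · rw [complement_of_far (by omega)]
      calc Eqv v (k :: j :: i :: k :: j :: w₅) :=
            hv.trans (((hw₁.trans ((hw₄.cons k).cons i)).cons j).cons k)
        Eqv _ (k :: i :: j :: k :: j :: w₅) := (eqv_swap (by omega) _).cons k
        Eqv _ (k :: i :: k :: j :: k :: w₅) := ((eqv_braid (by omega) w₅).cons i).cons k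
        Eqv _ (i :: k :: i :: j :: k :: w₅) := eqv_braid (by omega) _
        Eqv _ (i :: k :: j :: i :: k :: w₅) := ((eqv_swap (by omega) _).cons k).cons i
  · omega

theorem headLcm_braid (IH : KeyLemmaBelow L) (hik : k = i + 1 ∨ i = k + 1)
    (hρ : ρ.length + 1 < L) (h : HeadLcm k (i :: k :: ρ) j v) :
    HeadLcm i (k :: i :: ρ) j v := by
  obtain ⟨w₁, E, hv⟩ := h
  rcases letter_trichotomy k j with rfl | hkj | hkj
  · rw [complement_self] at E hv
    refine ⟨ρ, by simpa [complement_of_near hik] using Eqv.refl _, ?_⟩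
    simpa [complement_of_near (show i = k + 1 ∨ k = i + 1 by omega)] using hv.trans E.symm
  · rw [complement_of_far hkj] at E
    rw [complement_of_far (show j + 2 ≤ k ∨ k + 2 ≤ j by omega)] at hv
    exact IH.headLcm_braid_of_far hik hkj hρ E hv
  · rw [complement_of_near hkj] at E
    rw [complement_of_near (show k = j + 1 ∨ j = k + 1 by omega)] at hv
    exact IH.headLcm_braid_of_near hik hkj hρ E hv

end KeyLemmaBelow

theorem Step.cons_cases {i : ℕ} {u c : Word} (h : Step (i :: u) c) :
    (∃ u', Step u u' ∧ c = i :: u') ∨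
    (∃ k q, (i + 2 ≤ k ∨ k + 2 ≤ i) ∧ u = k :: q ∧ c = k :: i :: q) ∨
    (∃ k q, (k = i + 1 ∨ i = k + 1) ∧ u = k :: i :: q ∧ c = k :: i :: k :: q) := by
  obtain ⟨_ | ⟨x, p⟩, a, b, q, hr, h₁, rfl⟩ := h
  · right
    rcases hr with (⟨x, y, hxy⟩ | ⟨x⟩) | (⟨x, y, hxy⟩ | ⟨x⟩) <;>
      simp only [List.nil_append, List.cons_append, List.cons.injEq] at h₁ <;>
      obtain ⟨rfl, rfl⟩ := h₁
    · exact Or.inl ⟨y, q, Or.inl hxy, rfl, rfl⟩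
    · exact Or.inr ⟨i + 1, q, Or.inl rfl, rfl, rfl⟩
    · exact Or.inl ⟨x, q, Or.inr hxy, rfl, rfl⟩
    · exact Or.inr ⟨x, q, Or.inr rfl, rfl, rfl⟩
  · simp only [List.cons_append, List.cons.injEq] at h₁
    obtain ⟨rfl, rfl⟩ := h₁
    exact Or.inl ⟨_, ⟨p, a, b, q, hr, rfl, rfl⟩, rfl⟩

theorem headLcm_of_step {i j k : ℕ} {u u₁ v : Word} (IH : KeyLemmaBelow u.length)
    (hs : Step (i :: u) (k :: u₁)) (h : HeadLcm k u₁ j v) : HeadLcm i u j v := by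
  rcases hs.cons_cases with
    ⟨u', hu', hc⟩ | ⟨k', q, hfar, rfl, hc⟩ | ⟨k', q, hnear, rfl, hc⟩ <;>
    simp only [List.cons.injEq] at hc <;> obtain ⟨rfl, rfl⟩ := hc
  · obtain ⟨w, hu₁, hv⟩ := h
    exact ⟨w, (Eqv.of_step hu').trans hu₁, hv⟩
  · exact IH.headLcm_swap hfar (by simp) h
  · exact IH.headLcm_braid hnear (by simp) h

theorem keyLemmaBelow (L : ℕ) : KeyLemmaBelow L := by
  induction L using Nat.strong_induction_on with
  | _ L IH =>
  intro u v i j hu h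
  suffices ∀ x, Eqv x (j :: v) → ∀ i u, x = i :: u → u.length < L → HeadLcm i u j v from
    this _ h i u rfl hu
  intro x hx
  induction hx using Relation.ReflTransGen.head_induction_on with
  | refl =>
    rintro i u ⟨⟩ -
    exact HeadLcm.refl j v
  | @head x c hs _ ih =>
    rintro i u rfl hu
    obtain ⟨k, u₁, rfl⟩ : ∃ k u₁, c = k :: u₁ :=
      List.exists_cons_of_length_pos (by simp [← hs.length_eq])
    have hlen := hs.length_eq
    simp only [List.length_cons, Nat.add_right_cancel_iff] at hlen
    exact headLcm_of_step (IH _ hu) hs (ih k u₁ rfl (hlen ▸ hu))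

/-- Garside's key lemma. -/
theorem headLcm_of_eqv {i j : ℕ} {u v : Word} (h : Eqv (i :: u) (j :: v)) : HeadLcm i u j v :=
  keyLemmaBelow _ u v i j (Nat.lt_succ_self _) h

theorem Eqv.of_cons {a : ℕ} {u v : Word} (h : Eqv (a :: u) (a :: v)) : Eqv u v :=
  (keyLemmaBelow _).cancel (Nat.lt_succ_self _) h

theorem Eqv.of_append_left {p u v : Word} (h : Eqv (p ++ u) (p ++ v)) : Eqv u v := by
  induction p with
  | nil => simpa using h
  | cons a p ih => exact ih (Eqv.of_cons (by simpa using h))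

theorem Eqv.of_append_right {s u v : Word} (h : Eqv (u ++ s) (v ++ s)) : Eqv u v := by
  have := (Eqv.of_append_left (p := s.reverse) (by simpa using h.reverse)).reverse
  rwa [List.reverse_reverse, List.reverse_reverse] at this

def LeftDvd (u z : Word) : Prop := ∃ s, Eqv z (u ++ s)

namespace LeftDvd

variable {u v z z' : Word}

theorem refl (z : Word) : LeftDvd z z := ⟨[], by simpa using Eqv.refl z⟩

theorem nil (z : Word) : LeftDvd [] z := ⟨z, Eqv.refl z⟩

theorem of_eqv (h : LeftDvd u z) (h' : Eqv z z') : LeftDvd u z' :=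
  let ⟨s, hs⟩ := h
  ⟨s, h'.symm.trans hs⟩

theorem of_eqv_left (h : LeftDvd u z) (h' : Eqv u v) : LeftDvd v z :=
  let ⟨s, hs⟩ := h
  ⟨s, hs.trans (h'.append_right s)⟩

theorem trans (h : LeftDvd u v) (h' : LeftDvd v z) : LeftDvd u z := by
  obtain ⟨s, hs⟩ := h
  obtain ⟨t, ht⟩ := h'
  exact ⟨s ++ t, by simpa using ht.trans (hs.append_right t)⟩

theorem append_right (h : LeftDvd u z) (s : Word) : LeftDvd u (z ++ s) :=
  h.trans ⟨s, Eqv.refl _⟩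

theorem mem {x : ℕ} (h : LeftDvd u z) (hx : x ∈ u) : x ∈ z :=
  let ⟨_, hs⟩ := h
  hs.mem_iff.mpr (List.mem_append_left _ hx)

theorem cons_cons_iff {a : ℕ} : LeftDvd (a :: u) (a :: z) ↔ LeftDvd u z :=
  ⟨fun ⟨s, hs⟩ => ⟨s, Eqv.of_cons hs⟩, fun ⟨s, hs⟩ => ⟨s, hs.cons a⟩⟩

theorem singleton_cons_iff {i j : ℕ} :
    LeftDvd [i] (j :: z) ↔ LeftDvd (complement j i) z := by
  constructor
  · rintro ⟨s, hs⟩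
    obtain ⟨w, -, hz⟩ := headLcm_of_eqv hs.symm
    exact ⟨w, hz⟩
  · rintro ⟨w, hw⟩
    exact ⟨complement i j ++ w, (hw.cons j).trans (eqv_cons_complement i j w).symm⟩

end LeftDvd

def IsLcm (u v w : Word) : Prop :=
  LeftDvd u w ∧ LeftDvd v w ∧ ∀ z, LeftDvd u z → LeftDvd v z → LeftDvd w z

namespace IsLcm

variable {u v w : Word}

theorem nil_left (v : Word) : IsLcm [] v v :=
  ⟨LeftDvd.nil v, LeftDvd.refl v, fun _ _ h => h⟩

theorem nil_right (u : Word) : IsLcm u [] u :=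
  ⟨LeftDvd.refl u, LeftDvd.nil u, fun _ h _ => h⟩

theorem of_eqv {w' : Word} (h : IsLcm u v w) (hw : Eqv w w') : IsLcm u v w' :=
  ⟨h.1.of_eqv hw, h.2.1.of_eqv hw, fun z hu hv => (h.2.2 z hu hv).of_eqv_left hw⟩

theorem singleton_cons {i j : ℕ} {e : Word} (h : IsLcm (complement j i) v e) :
    IsLcm [i] (j :: v) (j :: e) := by
  refine ⟨LeftDvd.singleton_cons_iff.mpr h.1, LeftDvd.cons_cons_iff.mpr h.2.1, ?_⟩
  rintro z hi ⟨s, hs⟩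
  have hc : LeftDvd (complement j i) (v ++ s) := LeftDvd.singleton_cons_iff.mp (hi.of_eqv hs)
  exact (LeftDvd.cons_cons_iff.mpr (h.2.2 _ hc ⟨s, Eqv.refl _⟩)).of_eqv hs.symm

theorem cons {i : ℕ} {h c : Word} (hl : IsLcm [i] v (i :: h)) (hc : IsLcm u h c) :
    IsLcm (i :: u) v (i :: c) := by
  refine ⟨LeftDvd.cons_cons_iff.mpr hc.1, hl.2.1.trans (LeftDvd.cons_cons_iff.mpr hc.2.1), ?_⟩
  rintro z ⟨s, hs⟩ hv
  have hi : LeftDvd [i] z := ⟨u ++ s, hs⟩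
  have hh : LeftDvd h (u ++ s) := LeftDvd.cons_cons_iff.mp ((hl.2.2 z hi hv).of_eqv hs)
  exact (LeftDvd.cons_cons_iff.mpr (hc.2.2 _ ⟨s, Eqv.refl _⟩ hh)).of_eqv hs.symm

end IsLcm

theorem exists_isLcm_singleton {N : ℕ}
    (IH : ∀ {z u v : Word}, z.length < N → LeftDvd u z → LeftDvd v z → ∃ w, IsLcm u v w)
    {i : ℕ} {z v : Word} (hz : z.length ≤ N) (hi : LeftDvd [i] z) (hv : LeftDvd v z) :
    ∃ h, IsLcm [i] v (i :: h) := by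
  obtain ⟨l, hl⟩ : ∃ l, IsLcm [i] v l := by
    cases v with
    | nil => exact ⟨[i], IsLcm.nil_right _⟩
    | cons j v =>
      obtain ⟨t, ht⟩ := hv
      have hlen := ht.length_eq
      simp only [List.cons_append, List.length_cons, List.length_append] at hlen
      obtain ⟨e, he⟩ := IH (z := v ++ t) (by simp; omega)
        (LeftDvd.singleton_cons_iff.mp (hi.of_eqv ht)) ⟨t, Eqv.refl _⟩
      exact ⟨j :: e, he.singleton_cons⟩
  obtain ⟨h, hh⟩ := hl.1
  exact ⟨h, hl.of_eqv hh⟩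

theorem exists_isLcm_of_length_le (N : ℕ) :
    ∀ {z u v : Word}, z.length ≤ N → LeftDvd u z → LeftDvd v z → ∃ w, IsLcm u v w := by
  induction N using Nat.strong_induction_on with
  | _ N IH =>
  intro z u v hz hu hv
  cases u with
  | nil => exact ⟨v, IsLcm.nil_left v⟩
  | cons i u =>
    obtain ⟨s, hs⟩ := hu
    have hi : LeftDvd [i] z := ⟨u ++ s, hs⟩
    obtain ⟨h, hl⟩ := exists_isLcm_singleton (fun hz' => IH _ hz' le_rfl) hz hi hv
    have hh : LeftDvd h (u ++ s) := LeftDvd.cons_cons_iff.mp ((hl.2.2 z hi hv).of_eqv hs)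
    have hlen := hs.length_eq
    simp only [List.cons_append, List.length_cons] at hlen
    obtain ⟨c, hc⟩ := IH (N - 1) (by omega) (z := u ++ s) (by omega) ⟨s, Eqv.refl _⟩ hh
    exact ⟨i :: c, hl.cons hc⟩

theorem exists_isLcm {z u v : Word} (hu : LeftDvd u z) (hv : LeftDvd v z) : ∃ w, IsLcm u v w :=
  exists_isLcm_of_length_le _ le_rfl hu hv

theorem eqv_cons_of_far {k : ℕ} :
    ∀ s : Word, (∀ x ∈ s, x + 2 ≤ k ∨ k + 2 ≤ x) → Eqv (k :: s) (s ++ [k])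
  | [], _ => Eqv.refl _
  | a :: s, h => by
    have hs := eqv_cons_of_far s (fun x hx => h x (List.mem_cons_of_mem a hx))
    exact (eqv_swap (by have := h a List.mem_cons_self; omega) s).trans (hs.cons a)

theorem range_append_singleton_eqv {i m : ℕ} (h : i + 1 < m) :
    Eqv (List.range m ++ [i]) ((i + 1) :: List.range m) := by
  set s : Word := (List.range (m - i - 2)).map (fun x => i + 2 + x)
  have hrange : List.range m = List.range i ++ [i, i + 1] ++ s := by
    rw [show m = i + 2 + (m - i - 2) by omega, List.range_add]
    simp [s, List.range_succ]
  have hs : ∀ x ∈ s, x + 2 ≤ i ∨ i + 2 ≤ x := by simp [s]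
  have hi : ∀ x ∈ List.range i, x + 2 ≤ i + 1 ∨ i + 1 + 2 ≤ x := by simp; omega
  rw [hrange]
  calc Eqv (List.range i ++ [i, i + 1] ++ s ++ [i]) (List.range i ++ [i, i + 1, i] ++ s) := by
        simpa using ((eqv_cons_of_far s hs).symm.append_left (List.range i ++ [i, i + 1]))
    Eqv _ (List.range i ++ [i + 1] ++ [i, i + 1] ++ s) := by
        simpa using (eqv_braid (Or.inl rfl) s).append_left (List.range i)
    Eqv _ ((i + 1) :: (List.range i ++ [i, i + 1] ++ s)) := by
        simpa using ((eqv_cons_of_far _ hi).symm.append_right ([i, i + 1] ++ s))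

theorem reverse_range_append_singleton_eqv {i m : ℕ} (h : i + 1 < m) :
    Eqv ((List.range m).reverse ++ [i + 1]) (i :: (List.range m).reverse) := by
  simpa using (range_append_singleton_eqv h).reverse.symm

/-- The Garside element `Δ_{m+1} = (σ_1 ⋯ σ_m) Δ_m` of `B⁺_{m+1}`. -/
def deltaWord : ℕ → Word
  | 0 => []
  | m + 1 => List.range (m + 1) ++ deltaWord m

theorem lt_of_mem_deltaWord : ∀ {m x : ℕ}, x ∈ deltaWord m → x < m
  | 0, _, h => by simp [deltaWord] at h
  | m + 1, x, h => by
    rcases List.mem_append.mp h with h | h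
    · exact List.mem_range.mp h
    · exact (lt_of_mem_deltaWord h).trans (Nat.lt_succ_self m)

theorem deltaWord_succ_eqv :
    ∀ m : ℕ, Eqv (deltaWord (m + 1)) (deltaWord m ++ (List.range (m + 1)).reverse)
  | 0 => Eqv.refl _
  | m + 1 => by
    have hfar : ∀ x ∈ deltaWord m, x + 2 ≤ m + 1 ∨ m + 1 + 2 ≤ x :=
      fun x hx => by have := lt_of_mem_deltaWord hx; omega
    calc Eqv (deltaWord (m + 2)) (List.range (m + 1) ++ ((m + 1) :: deltaWord (m + 1))) := by
          simp [deltaWord, List.range_succ]; exact Eqv.refl _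
      Eqv _ (List.range (m + 1) ++ ((m + 1) :: (deltaWord m ++ (List.range (m + 1)).reverse))) :=
          ((deltaWord_succ_eqv m).cons _).append_left _
      Eqv _ (List.range (m + 1) ++ (deltaWord m ++ [m + 1] ++ (List.range (m + 1)).reverse)) := by
          simpa using ((eqv_cons_of_far _ hfar).append_right _).append_left (List.range (m + 1))
      Eqv _ (deltaWord (m + 1) ++ (List.range (m + 2)).reverse) := by
          simp [deltaWord, List.range_succ (n := m + 1)]; exact Eqv.refl _

theorem deltaWord_append_singleton_eqv :
    ∀ {m i : ℕ}, i < m → Eqv (deltaWord m ++ [i]) ((m - 1 - i) :: deltaWord m)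
  | m + 1, i, h => by
    rcases Nat.lt_or_ge i m with hi | hi
    · have e := (deltaWord_append_singleton_eqv hi).append_left (List.range (m + 1))
      have e' := (range_append_singleton_eqv (show m - 1 - i + 1 < m + 1 by omega)).append_right
        (deltaWord m)
      rw [show m + 1 - 1 - i = m - 1 - i + 1 by omega]
      simpa [deltaWord] using e.trans (by simpa using e')
    · obtain rfl : i = m := by omega
      cases i with
      | zero => exact Eqv.refl _
      | succ i =>
        rw [show i + 1 + 1 - 1 - (i + 1) = 0 by omega]
        calc Eqv (deltaWord (i + 2) ++ [i + 1])
              (deltaWord (i + 1) ++ ((List.range (i + 2)).reverse ++ [i + 1])) := by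
              simpa using (deltaWord_succ_eqv (i + 1)).append_right [i + 1]
          Eqv _ ((deltaWord (i + 1) ++ [i]) ++ (List.range (i + 2)).reverse) := by
              simpa using (reverse_range_append_singleton_eqv (Nat.lt_succ_self _)).append_left
                (deltaWord (i + 1))
          Eqv _ (0 :: (deltaWord (i + 1) ++ (List.range (i + 2)).reverse)) := by
              simpa using (deltaWord_append_singleton_eqv (Nat.lt_succ_self i)).append_right
                (List.range (i + 2)).reverse
          Eqv _ (0 :: deltaWord (i + 2)) := (deltaWord_succ_eqv (i + 1)).symm.cons 0

theorem singleton_leftDvd_deltaWord : ∀ {m i : ℕ}, i < m → LeftDvd [i] (deltaWord m)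
  | m + 1, 0, _ => ⟨(List.range m).map Nat.succ ++ deltaWord m, by
      simpa [deltaWord, List.range_succ_eq_map] using Eqv.refl _⟩
  | m + 1, i + 1, h => by
    obtain ⟨t, ht⟩ := singleton_leftDvd_deltaWord (show i < m by omega)
    refine ⟨List.range (m + 1) ++ t, ?_⟩
    calc Eqv (deltaWord (m + 1)) (List.range (m + 1) ++ [i] ++ t) := by
          simpa [deltaWord] using ht.append_left (List.range (m + 1))
      Eqv _ ([i + 1] ++ (List.range (m + 1) ++ t)) := by
          simpa using (range_append_singleton_eqv h).append_right t

theorem exists_append_deltaWord_eqv {m : ℕ} :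
    ∀ s : Word, (∀ x ∈ s, x < m) → ∃ s', Eqv (s ++ deltaWord m) (deltaWord m ++ s')
  | [], _ => ⟨[], by simpa using Eqv.refl _⟩
  | a :: s, h => by
    obtain ⟨s', hs'⟩ :=
      exists_append_deltaWord_eqv s (fun x hx => h x (List.mem_cons_of_mem a hx))
    have ha : a < m := h a List.mem_cons_self
    have e := (deltaWord_append_singleton_eqv (show m - 1 - a < m by omega)).symm
    rw [show m - 1 - (m - 1 - a) = a by omega] at e
    refine ⟨(m - 1 - a) :: s', ?_⟩
    simpa using (hs'.cons a).trans (by simpa using e.append_right s')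

def deltaPow (m k : ℕ) : Word := (List.replicate k (deltaWord m)).flatten

theorem lt_of_mem_deltaPow {m k x : ℕ} (h : x ∈ deltaPow m k) : x < m := by
  simp only [deltaPow, List.mem_flatten, List.mem_replicate] at h
  obtain ⟨_, ⟨-, rfl⟩, hx⟩ := h
  exact lt_of_mem_deltaWord hx

theorem leftDvd_deltaPow_length {m : ℕ} (u : Word) (hu : ∀ x ∈ u, x < m) :
    LeftDvd u (deltaPow m u.length) := by
  induction u using List.reverseRecOn with
  | nil => exact LeftDvd.nil _
  | append_singleton u a ih =>
    obtain ⟨s, hs⟩ := ih (fun x hx => hu x (List.mem_append_left _ hx))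
    obtain ⟨s', hs'⟩ := exists_append_deltaWord_eqv (m := m) s
      (fun x hx => lt_of_mem_deltaPow (hs.mem_iff.mpr (List.mem_append_right _ hx)))
    obtain ⟨t, ht⟩ := singleton_leftDvd_deltaWord (hu a (by simp))
    refine ⟨t ++ s', ?_⟩
    calc Eqv (deltaPow m (u ++ [a]).length) (u ++ s ++ deltaWord m) := by
          simpa [deltaPow, List.replicate_succ'] using hs.append_right (deltaWord m)
      Eqv _ (u ++ (deltaWord m ++ s')) := by simpa using hs'.append_left u
      Eqv _ (u ++ [a] ++ (t ++ s')) := by simpa using (ht.append_right s').append_left u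

theorem exists_common_multiple {m : ℕ} {u v : Word} (hu : ∀ x ∈ u, x < m)
    (hv : ∀ x ∈ v, x < m) : ∃ z, LeftDvd u z ∧ LeftDvd v z ∧ ∀ x ∈ z, x < m := by
  have hpow : ∀ a b, deltaPow m (a + b) = deltaPow m a ++ deltaPow m b := by
    simp only [deltaPow, List.replicate_add, List.flatten_append, implies_true]
  refine ⟨deltaPow m (u.length + v.length), ?_, ?_, fun x hx => lt_of_mem_deltaPow hx⟩
  · rw [hpow]
    exact (leftDvd_deltaPow_length u hu).append_right _
  · rw [add_comm, hpow]
    exact (leftDvd_deltaPow_length v hv).append_right _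

def braidCon : Con (FreeMonoid ℕ) where
  r a b := Eqv a.toList b.toList
  iseqv := ⟨fun _ => Eqv.refl _, Eqv.symm, Eqv.trans⟩
  mul' h h' := by simpa using h.append h'

/-- The positive braid monoid on infinitely many strands. -/
abbrev PosBraid : Type := braidCon.Quotient

namespace PosBraid

def mk (u : Word) : PosBraid := (FreeMonoid.ofList u : FreeMonoid ℕ)

theorem mk_eq_mk_iff {u v : Word} : mk u = mk v ↔ Eqv u v := by
  simp only [mk, Con.eq]
  rfl

theorem mk_append (u v : Word) : mk (u ++ v) = mk u * mk v := by
  rw [mk, mk, mk, FreeMonoid.ofList_append, Con.coe_mul]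

theorem mk_surjective : Function.Surjective mk := by
  intro x
  induction x using Con.induction_on with
  | H a => exact ⟨a.toList, by simp [mk]⟩

instance : IsCancelMul PosBraid where
  mul_left_cancel a b c h := by
    obtain ⟨u, rfl⟩ := mk_surjective a
    obtain ⟨v, rfl⟩ := mk_surjective b
    obtain ⟨w, rfl⟩ := mk_surjective c
    simp only [← mk_append, mk_eq_mk_iff] at h
    exact mk_eq_mk_iff.mpr (Eqv.of_append_left h)
  mul_right_cancel a b c h := by
    obtain ⟨u, rfl⟩ := mk_surjective a
    obtain ⟨v, rfl⟩ := mk_surjective b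
    obtain ⟨w, rfl⟩ := mk_surjective c
    simp only [← mk_append, mk_eq_mk_iff] at h
    exact mk_eq_mk_iff.mpr (Eqv.of_append_right h)

-- Common left multiples, from common right multiples of the reversed words.
theorem exists_mul_eq_mul (r s : PosBraid) : ∃ r' s', s' * r = r' * s := by
  obtain ⟨u, rfl⟩ := mk_surjective r
  obtain ⟨v, rfl⟩ := mk_surjective s
  have hbound : ∀ x ∈ u.reverse ++ v.reverse, x < (u ++ v).sum + 1 := fun x hx =>
    Nat.lt_succ_of_le (List.le_sum_of_mem (by simpa [or_comm] using hx))
  obtain ⟨z, ⟨a, ha⟩, ⟨b, hb⟩, -⟩ := exists_common_multiple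
    (fun x hx => hbound x (List.mem_append_left _ hx))
    (fun x hx => hbound x (List.mem_append_right _ hx))
  refine ⟨mk b.reverse, mk a.reverse, ?_⟩
  rw [← mk_append, ← mk_append, mk_eq_mk_iff]
  simpa using ha.reverse.symm.trans hb.reverse

end PosBraid

noncomputable instance : OreLocalization.OreSet (⊤ : Submonoid PosBraid) where
  ore_right_cancel _ _ _ h := ⟨1, by rw [mul_right_cancel h]⟩
  oreNum r s := (PosBraid.exists_mul_eq_mul r s).choose
  oreDenom r s := ⟨(PosBraid.exists_mul_eq_mul r s).choose_spec.choose, trivial⟩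
  ore_eq r s := (PosBraid.exists_mul_eq_mul r s).choose_spec.choose_spec

abbrev PosBraidFrac : Type := OreLocalization (⊤ : Submonoid PosBraid) PosBraid

theorem numeratorHom_injective :
    Function.Injective (OreLocalization.numeratorHom : PosBraid →* PosBraidFrac) := by
  intro r r' h
  rw [OreLocalization.numeratorHom_apply, OreLocalization.numeratorHom_apply,
    OreLocalization.oreDiv_eq_iff] at h
  obtain ⟨u, v, h₁, h₂⟩ := h
  have huv : (u : PosBraid) = v := by simpa using h₂
  rw [Submonoid.smul_def, smul_eq_mul, smul_eq_mul, huv] at h₁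
  exact (mul_left_cancel h₁).symm

noncomputable def PosBraid.toFracUnits : PosBraid →* PosBraidFracˣ :=
  IsUnit.liftRight OreLocalization.numeratorHom
    fun r => OreLocalization.numerator_isUnit
      (⟨r, Submonoid.mem_top r⟩ : (⊤ : Submonoid PosBraid))

theorem PosBraid.toFracUnits_injective : Function.Injective PosBraid.toFracUnits :=
  fun _ _ h => numeratorHom_injective (congrArg Units.val h)

theorem lift_braidRels_eq_one {G : Type*} [Group G] (φ : PosBraid →* G) (m : ℕ) :
    ∀ r ∈ braidRels m, FreeGroup.lift (fun x : Fin m => φ (PosBraid.mk [x])) r = 1 := by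
  have hφ : ∀ {u v : Word}, Eqv u v → φ (PosBraid.mk u) = φ (PosBraid.mk v) :=
    fun h => congrArg φ (PosBraid.mk_eq_mk_iff.mpr h)
  have hmk : ∀ (x y : ℕ) (u : Word),
      φ (PosBraid.mk (x :: y :: u)) = φ (PosBraid.mk [x]) * φ (PosBraid.mk (y :: u)) :=
    fun x y u => by rw [← map_mul, ← PosBraid.mk_append]; rfl
  rintro r ⟨i, j, ⟨hij, rfl⟩ | ⟨hij, rfl⟩⟩
  · have h := hφ (eqv_swap (Or.inl hij) [])
    simp only [hmk] at h
    simp only [map_mul, map_inv, FreeGroup.lift_apply_of, h]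
    group
  · have h := hφ (eqv_braid (Or.inl hij) [])
    simp only [hmk] at h
    simp only [map_mul, map_inv, FreeGroup.lift_apply_of]
    generalize φ (PosBraid.mk [i]) = a, φ (PosBraid.mk [j]) = b at h ⊢
    rw [show a * b * a * b⁻¹ * a⁻¹ * b⁻¹ = a * b * a * (b * a * b)⁻¹ by group,
      mul_inv_eq_one]
    simpa only [mul_assoc] using h

end Garside

open Garside

def wordProd (n : ℕ) (u : Word) : B n := (u.map fun x => gen n (x + 1)).prod

@[simp]
theorem wordProd_nil (n : ℕ) : wordProd n [] = 1 := rfl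

@[simp]
theorem wordProd_append (n : ℕ) (u v : Word) :
    wordProd n (u ++ v) = wordProd n u * wordProd n v := by
  simp [wordProd]

@[simp]
theorem wordProd_cons (n x : ℕ) (u : Word) :
    wordProd n (x :: u) = gen n (x + 1) * wordProd n u := by
  simp [wordProd]

theorem gen_succ_eq_of {n x : ℕ} (hx : x < n - 1) :
    gen n (x + 1) = PresentedGroup.of (⟨x, hx⟩ : Fin (n - 1)) := by
  simp [gen, hx]

theorem gen_mul_gen_comm {n x y : ℕ} (hxy : x + 2 ≤ y) (hy : y < n - 1) :
    gen n (x + 1) * gen n (y + 1) = gen n (y + 1) * gen n (x + 1) := by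
  have hx : x < n - 1 := by omega
  rw [gen_succ_eq_of hx, gen_succ_eq_of hy]
  refine PresentedGroup.mk_eq_mk_of_mul_inv_mem ?_
  exact ⟨⟨x, hx⟩, ⟨y, hy⟩, Or.inl ⟨hxy, by group⟩⟩

theorem gen_braid {n x : ℕ} (hx : x + 1 < n - 1) :
    gen n (x + 1) * gen n (x + 2) * gen n (x + 1) =
      gen n (x + 2) * gen n (x + 1) * gen n (x + 2) := by
  have hx' : x < n - 1 := by omega
  rw [gen_succ_eq_of hx', gen_succ_eq_of hx]
  refine PresentedGroup.mk_eq_mk_of_mul_inv_mem ?_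
  exact ⟨⟨x, hx'⟩, ⟨x + 1, hx⟩, Or.inr ⟨rfl, by group⟩⟩

theorem wordProd_eq_of_braidRel {n : ℕ} {a b : Word} (h : BraidRel a b)
    (ha : ∀ x ∈ a, x < n - 1) : wordProd n a = wordProd n b := by
  cases h with
  | far i j hij => simpa using gen_mul_gen_comm hij (ha j (by simp))
  | near i => simpa [mul_assoc] using gen_braid (ha (i + 1) (by simp))

theorem wordProd_eq_of_eqv {n : ℕ} {u v : Word} (h : Eqv u v) (hu : ∀ x ∈ u, x < n - 1) :
    wordProd n u = wordProd n v := by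
  induction h with
  | refl => rfl
  | tail hc hs ih =>
    obtain ⟨p, a, b, q, hr, rfl, rfl⟩ := hs
    have ha : ∀ x ∈ a, x < n - 1 :=
      fun x hx => hu x ((show Eqv _ _ from hc).mem_iff.mpr (by simp [hx]))
    have hab : wordProd n a = wordProd n b :=
      hr.elim (wordProd_eq_of_braidRel · ha)
        (fun h => (wordProd_eq_of_braidRel h fun x hx => ha x (h.mem_iff.mp hx)).symm)
    simp only [ih, wordProd_append, hab]

noncomputable def toPosBraidFrac (n : ℕ) : B n →* PosBraidFracˣ :=
  PresentedGroup.toGroup (lift_braidRels_eq_one PosBraid.toFracUnits (n - 1))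

theorem toPosBraidFrac_wordProd {n : ℕ} (u : Word) (hu : ∀ x ∈ u, x < n - 1) :
    toPosBraidFrac n (wordProd n u) = PosBraid.toFracUnits (PosBraid.mk u) := by
  induction u with
  | nil => simp [PosBraid.mk]
  | cons x u ih =>
    have hx : x < n - 1 := hu x List.mem_cons_self
    rw [wordProd_cons, map_mul, ih (fun y hy => hu y (List.mem_cons_of_mem x hy)),
      gen_succ_eq_of hx, toPosBraidFrac, PresentedGroup.toGroup.of, ← map_mul,
      ← PosBraid.mk_append]
    rfl

theorem eqv_of_wordProd_eq {n : ℕ} {u v : Word} (hu : ∀ x ∈ u, x < n - 1)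
    (hv : ∀ x ∈ v, x < n - 1) (h : wordProd n u = wordProd n v) : Eqv u v := by
  have h' := congrArg (toPosBraidFrac n) h
  rw [toPosBraidFrac_wordProd u hu, toPosBraidFrac_wordProd v hv] at h'
  exact PosBraid.mk_eq_mk_iff.mp (PosBraid.toFracUnits_injective h')

theorem mem_Bplus_iff {n k : ℕ} {β : B n} :
    β ∈ Bplus n k ↔ ∃ u : Word, (∀ x ∈ u, x < k - 1) ∧ wordProd n u = β := by
  constructor
  · intro h
    obtain ⟨l, hl, rfl⟩ := Submonoid.exists_list_of_mem_closure h
    clear h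
    induction l with
    | nil => exact ⟨[], by simp, rfl⟩
    | cons y l ih =>
      obtain ⟨u, hu, hprod⟩ := ih (fun z hz => hl z (List.mem_cons_of_mem y hz))
      obtain ⟨i, hi, hik, rfl⟩ := hl y List.mem_cons_self
      refine ⟨(i - 1) :: u, ?_, ?_⟩
      · simp only [List.mem_cons, forall_eq_or_imp]
        exact ⟨by omega, hu⟩
      · rw [wordProd_cons, hprod, Nat.sub_add_cancel hi, List.prod_cons]
  · rintro ⟨u, hu, rfl⟩
    induction u with
    | nil => exact one_mem _
    | cons x u ih =>
      rw [wordProd_cons]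
      refine mul_mem (Submonoid.subset_closure ⟨x + 1, by omega, ?_, rfl⟩)
        (ih fun y hy => hu y (List.mem_cons_of_mem x hy))
      have := hu x List.mem_cons_self
      omega

theorem Bplus_mono {n k l : ℕ} (hkl : k ≤ l) : Bplus n k ≤ Bplus n l :=
  Submonoid.closure_mono fun _ ⟨i, hi, hik, hx⟩ => ⟨i, hi, hik.trans hkl, hx⟩

theorem ldiv_wordProd_iff {n : ℕ} {u z : Word} (hu : ∀ x ∈ u, x < n - 1)
    (hz : ∀ x ∈ z, x < n - 1) : LDiv n (wordProd n u) (wordProd n z) ↔ LeftDvd u z := by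
  constructor
  · intro h
    obtain ⟨s, hs, hprod⟩ := mem_Bplus_iff.mp h
    refine ⟨s, eqv_of_wordProd_eq hz ?_ ?_⟩
    · simp only [List.mem_append]
      rintro x (hx | hx)
      exacts [hu x hx, hs x hx]
    · rw [wordProd_append, hprod, mul_inv_cancel_left]
  · rintro ⟨s, hs⟩
    rw [LDiv, wordProd_eq_of_eqv hs hz, wordProd_append, inv_mul_cancel_left]
    exact mem_Bplus_iff.mpr ⟨s, fun x hx => hz x (hs.mem_iff.mpr (by simp [hx])), rfl⟩

theorem exists_lcm_of_mem_Bplus {n k : ℕ} (hk : k ≤ n) {β γ : B n} (hβ : β ∈ Bplus n k)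
    (hγ : γ ∈ Bplus n k) :
    ∃ δ ∈ Bplus n k, LDiv n β δ ∧ LDiv n γ δ ∧
      ∀ ε, LDiv n β ε → LDiv n γ ε → LDiv n δ ε := by
  obtain ⟨u, hu, rfl⟩ := mem_Bplus_iff.mp hβ
  obtain ⟨v, hv, rfl⟩ := mem_Bplus_iff.mp hγ
  obtain ⟨z, hzu, hzv, hz⟩ := exists_common_multiple hu hv
  obtain ⟨w, hw⟩ := exists_isLcm hzu hzv
  have hw' : ∀ x ∈ w, x < k - 1 := fun x hx => hz x ((hw.2.2 z hzu hzv).mem hx)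
  have hn : ∀ {y : Word}, (∀ x ∈ y, x < k - 1) → ∀ x ∈ y, x < n - 1 :=
    fun hy x hx => (hy x hx).trans_le (Nat.sub_le_sub_right hk 1)
  refine ⟨wordProd n w, mem_Bplus_iff.mpr ⟨w, hw', rfl⟩,
    (ldiv_wordProd_iff (hn hu) (hn hw')).mpr hw.1, (ldiv_wordProd_iff (hn hv) (hn hw')).mpr hw.2.1,
    fun ε hβε hγε => ?_⟩
  have hε : ε ∈ Bplus n n := by
    simpa using mul_mem (Bplus_mono hk hβ) hβε
  obtain ⟨e, he, rfl⟩ := mem_Bplus_iff.mp hε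
  exact (ldiv_wordProd_iff (hn hw') he).mpr
    (hw.2.2 e ((ldiv_wordProd_iff (hn hu) he).mp hβε) ((ldiv_wordProd_iff (hn hv) he).mp hγε))

theorem Bplus_pred_closed_under_left_lcm_general (n : ℕ) (β γ : B n)
    (hβ : β ∈ Bplus n (n - 1)) (hγ : γ ∈ Bplus n (n - 1)) :
    ∃ δ : B n, δ ∈ Bplus n n ∧ LDiv n β δ ∧ LDiv n γ δ ∧
      (∀ ε ∈ Bplus n n, LDiv n β ε → LDiv n γ ε → LDiv n δ ε) ∧
      δ ∈ Bplus n (n - 1) := by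
  obtain ⟨δ, hδ, hβδ, hγδ, hmin⟩ := exists_lcm_of_mem_Bplus (Nat.sub_le n 1) hβ hγ
  exact ⟨δ, Bplus_mono (Nat.sub_le n 1) hδ, hβδ, hγδ, fun ε _ => hmin ε, hδ⟩

/-- For `n ≥ 3`, any two elements of `B⁺_{n-1}` admit in `B⁺_n` a least
common multiple with respect to left divisibility, and it lies in `B⁺_{n-1}`. -/
theorem Bplus_pred_closed_under_left_lcm (n : ℕ) (hn : 3 ≤ n) (β γ : B n)
    (hβ : β ∈ Bplus n (n - 1)) (hγ : γ ∈ Bplus n (n - 1)) :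
    ∃ δ : B n, δ ∈ Bplus n n ∧ LDiv n β δ ∧ LDiv n γ δ ∧
      (∀ ε ∈ Bplus n n, LDiv n β ε → LDiv n γ ε → LDiv n δ ε) ∧
      δ ∈ Bplus n (n - 1) :=
  Bplus_pred_closed_under_left_lcm_general n β γ hβ hγ

end Braid
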